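/- arXiv:2201.07524 — 4 statements merged into one kernel-verified Lean document; each statement's English description precedes it below -/
import Mathlib

section
/- Weak duality for the Sinkhorn problem: for all strictly positive vectors α ∈ ℝ^n and α̃ ∈ ℝ^ñ and every coupling π of (p, p̃) with strictly positive entries, d(α, α̃) ≤ F_λ(π). -/
open Finset

/-- Entropy of a matrix (convention `0 * log 0 = 0` holds since `Real.log 0 = 0`). -/
noncomputable def entM {n m : ℕ} (π : Fin n → Fin m → ℝ) : ℝ :=
  -∑ i, ∑ j, π i j * Real.log (π i j)

/-- A coupling of `(p, pt)`: nonnegative entries, row sums `p`, column sums `pt`. -/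
def IsCoupling {n m : ℕ} (p : Fin n → ℝ) (pt : Fin m → ℝ) (π : Fin n → Fin m → ℝ) : Prop :=
  (∀ i j, 0 ≤ π i j) ∧ (∀ i, ∑ j, π i j = p i) ∧ (∀ j, ∑ i, π i j = pt j)

/-- The Sinkhorn (entropy-regularized) objective. -/
noncomputable def Fobj {n m : ℕ} (lam : ℝ) (c π : Fin n → Fin m → ℝ) : ℝ :=
  (∑ i, ∑ j, π i j * c i j) - (1 / lam) * entM π

/-- The dual function of the Sinkhorn problem. -/
noncomputable def dual {n m : ℕ} (lam : ℝ) (c : Fin n → Fin m → ℝ)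
    (p : Fin n → ℝ) (pt : Fin m → ℝ) (α : Fin n → ℝ) (αt : Fin m → ℝ) : ℝ :=
  1 / lam + (1 / lam) * ∑ i, p i * Real.log (α i)
    + (1 / lam) * ∑ j, pt j * Real.log (αt j)
    - (1 / lam) * ∑ i, ∑ j, α i * Real.exp (-lam * c i j) * αt j

private lemma key_ineq (x k : ℝ) (hx : 0 < x) (hk : 0 < k) :
    0 ≤ x * Real.log x - x * Real.log k - x + k := by
  have h := Real.log_le_sub_one_of_pos (show 0 < k / x by positivity)
  rw [Real.log_div (ne_of_gt hk) (ne_of_gt hx)] at h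
  have hx' : x ≠ 0 := ne_of_gt hx
  have : x * (Real.log k - Real.log x) ≤ x * (k / x - 1) :=
    mul_le_mul_of_nonneg_left h (le_of_lt hx)
  have hxk : x * (k / x - 1) = k - x := by field_simp
  nlinarith

/-- Weak duality for the Sinkhorn problem. -/
theorem sinkhorn_weak_duality {n m : ℕ} (hn : 1 ≤ n) (hm : 1 ≤ m)
    (p : Fin n → ℝ) (pt : Fin m → ℝ)
    (hp0 : ∀ i, 0 ≤ p i) (hpt0 : ∀ j, 0 ≤ pt j)
    (hp1 : ∑ i, p i = 1) (hpt1 : ∑ j, pt j = 1)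
    (c : Fin n → Fin m → ℝ) (hc : ∀ i j, 0 ≤ c i j)
    (lam : ℝ) (hlam : 0 < lam)
    (α : Fin n → ℝ) (αt : Fin m → ℝ)
    (hα : ∀ i, 0 < α i) (hαt : ∀ j, 0 < αt j)
    (π : Fin n → Fin m → ℝ) (hπ : IsCoupling p pt π) (hπpos : ∀ i j, 0 < π i j) :
    dual lam c p pt α αt ≤ Fobj lam c π := by
  obtain ⟨hπ0, hrow, hcol⟩ := hπ
  set K : Fin n → Fin m → ℝ := fun i j => α i * Real.exp (-lam * c i j) * αt j with hK
  have hKpos : ∀ i j, 0 < K i j := fun i j =>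
    mul_pos (mul_pos (hα i) (Real.exp_pos _)) (hαt j)
  have hlogK : ∀ i j, Real.log (K i j)
      = Real.log (α i) + (-lam * c i j) + Real.log (αt j) := by
    intro i j
    simp only [hK]
    rw [Real.log_mul (ne_of_gt (mul_pos (hα i) (Real.exp_pos _))) (ne_of_gt (hαt j)),
        Real.log_mul (ne_of_gt (hα i)) (Real.exp_ne_zero _), Real.log_exp]
  have hsum : 0 ≤ ∑ i, ∑ j,
      (π i j * Real.log (π i j) - π i j * Real.log (K i j) - π i j + K i j) := by
    apply Finset.sum_nonneg; intro i _
    apply Finset.sum_nonneg; intro j _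
    exact key_ineq _ _ (hπpos i j) (hKpos i j)
  have h1 : ∀ i j, π i j * Real.log (K i j)
      = π i j * Real.log (α i) + (-lam) * (π i j * c i j) + π i j * Real.log (αt j) := by
    intro i j; rw [hlogK]; ring
  have hBsplit : ∑ i, ∑ j, π i j * Real.log (K i j)
      = (∑ i, ∑ j, π i j * Real.log (α i)) + (-lam) * (∑ i, ∑ j, π i j * c i j)
        + (∑ i, ∑ j, π i j * Real.log (αt j)) := by
    simp only [h1]
    simp [Finset.sum_add_distrib, Finset.mul_sum]
  have hexp : ∑ i, ∑ j,
      (π i j * Real.log (π i j) - π i j * Real.log (K i j) - π i j + K i j)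
      = (∑ i, ∑ j, π i j * Real.log (π i j))
        - (∑ i, ∑ j, π i j * Real.log (α i))
        + lam * (∑ i, ∑ j, π i j * c i j)
        - (∑ i, ∑ j, π i j * Real.log (αt j))
        - (∑ i, ∑ j, π i j)
        + (∑ i, ∑ j, K i j) := by
    have h2 : ∑ i, ∑ j,
        (π i j * Real.log (π i j) - π i j * Real.log (K i j) - π i j + K i j)
        = (∑ i, ∑ j, π i j * Real.log (π i j)) - (∑ i, ∑ j, π i j * Real.log (K i j))
          - (∑ i, ∑ j, π i j) + (∑ i, ∑ j, K i j) := by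
      simp [Finset.sum_add_distrib, Finset.sum_sub_distrib]
    rw [h2, hBsplit]; ring
  have hA : ∑ i, ∑ j, π i j * Real.log (α i) = ∑ i, p i * Real.log (α i) := by
    refine Finset.sum_congr rfl fun i _ => ?_
    rw [← Finset.sum_mul, hrow i]
  have hB : ∑ i, ∑ j, π i j * Real.log (αt j) = ∑ j, pt j * Real.log (αt j) := by
    rw [Finset.sum_comm]
    refine Finset.sum_congr rfl fun j _ => ?_
    rw [← Finset.sum_mul, hcol j]
  have hT : ∑ i, ∑ j, π i j = 1 := by
    rw [show (∑ i, ∑ j, π i j) = ∑ i, p i from Finset.sum_congr rfl fun i _ => hrow i, hp1]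
  rw [hexp, hA, hB, hT] at hsum
  have key2 : lam * Fobj lam c π - lam * dual lam c p pt α αt
      = (∑ i, ∑ j, π i j * Real.log (π i j))
        - (∑ i, p i * Real.log (α i))
        + lam * (∑ i, ∑ j, π i j * c i j)
        - (∑ j, pt j * Real.log (αt j))
        - 1
        + (∑ i, ∑ j, K i j) := by
    simp only [Fobj, dual, entM, hK]
    field_simp
    ring
  nlinarith [hsum, key2, hlam]
end

section
/- Strong duality for the Sinkhorn problem (Proposition 3.5): if all p_i > 0 and all p̃_j > 0, then the supremum of d(α, α̃) over strictly positive vectors α ∈ ℝ^n and α̃ ∈ ℝ^ñ equals the minimum of F_λ(π) over couplings π of (p, p̃) with strictly positive entries, and both are attained. -/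
open Finset

/-!
For a Gibbs kernel `Kᵢⱼ = αᵢ e^{-λ cᵢⱼ} α̃ⱼ` and a coupling `π`, `λ (F(π) - d(α, α̃))` is the
generalized Kullback–Leibler divergence `∑ πᵢⱼ log (πᵢⱼ / Kᵢⱼ) - πᵢⱼ + Kᵢⱼ ≥ 0`, which vanishes
for `π = K`. So it suffices to show that some minimizer of `F` over the compact set of couplings
is a Gibbs kernel. A minimizer has no zero entry: moving towards `p ⊗ p̃` changes `F` by at most
`O(t) + t log t · p_i p̃_j / λ` when `πᵢⱼ = 0`, since `x log x` has slope `-∞` at `0`. At a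
positive minimizer the derivative of `F` vanishes along the marginal-preserving directions
`(eᵢ - eᵢ₀) ⊗ (eⱼ - eⱼ₀)`, so the gradient `cᵢⱼ + (log πᵢⱼ + 1) / λ` splits as `aᵢ + bⱼ`, which
says exactly that `π` is a Gibbs kernel.
-/

open Filter Topology
open Real (log exp)

lemma sub_le_mul_log_sub_log {a b : ℝ} (ha : 0 ≤ a) (hb : 0 < b) :
    a - b ≤ a * (log a - log b) := by
  rcases ha.eq_or_lt with rfl | ha
  · simp [hb.le]
  · have h := Real.log_le_sub_one_of_pos (div_pos hb ha)
    rw [Real.log_div hb.ne' ha.ne'] at h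
    have h' := mul_le_mul_of_nonneg_left h ha.le
    rw [mul_sub, mul_sub, mul_div_cancel₀ _ ha.ne', mul_one] at h'
    linarith

noncomputable def gibbsKernel {ι κ : Type*} (lam : ℝ) (c : ι → κ → ℝ) (α : ι → ℝ) (αt : κ → ℝ)
    (i : ι) (j : κ) : ℝ :=
  α i * exp (-lam * c i j) * αt j

lemma gibbsKernel_pos {ι κ : Type*} (lam : ℝ) (c : ι → κ → ℝ) {α : ι → ℝ} {αt : κ → ℝ}
    (hα : ∀ i, 0 < α i) (hαt : ∀ j, 0 < αt j) (i : ι) (j : κ) :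
    0 < gibbsKernel lam c α αt i j :=
  mul_pos (mul_pos (hα i) (Real.exp_pos _)) (hαt j)

noncomputable def entryCost (lam c x : ℝ) : ℝ := x * c + x * log x / lam

lemma convexOn_entryCost {lam : ℝ} (hlam : 0 ≤ lam) (c : ℝ) :
    ConvexOn ℝ (Set.Ici 0) (entryCost lam c) := by
  have hcost : ConvexOn ℝ (Set.Ici (0 : ℝ)) fun x => x * c :=
    (LinearMap.mul ℝ ℝ |>.flip c).convexOn (convex_Ici 0)
  refine (hcost.add (Real.convexOn_mul_log.smul (inv_nonneg.2 hlam))).congr fun x _ => ?_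
  simp only [Pi.add_apply, smul_eq_mul, entryCost]
  ring

lemma entryCost_mul (lam c b : ℝ) {t : ℝ} (ht : 0 < t) :
    entryCost lam c (t * b) = t * entryCost lam c b + t * b * log t / lam := by
  rcases eq_or_ne b 0 with rfl | hb
  · simp [entryCost]
  · rw [entryCost, entryCost, Real.log_mul ht.ne' hb]
    ring

lemma hasDerivAt_entryCost (lam c : ℝ) {x : ℝ} (hx : x ≠ 0) :
    HasDerivAt (entryCost lam c) (c + (log x + 1) / lam) x := by
  have h := ((hasDerivAt_id x).mul_const c).fun_add ((Real.hasDerivAt_mul_log hx).div_const lam)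
  rw [one_mul] at h
  exact h

lemma exists_add_of_forall_sum_mul_mul_eq_zero {ι κ : Type*} [Fintype ι] [Fintype κ]
    {ψ : ι → κ → ℝ}
    (h : ∀ (u : ι → ℝ) (v : κ → ℝ), ∑ i, u i = 0 → ∑ j, v j = 0 →
      ∑ i, ∑ j, u i * v j * ψ i j = 0) :
    ∃ (a : ι → ℝ) (b : κ → ℝ), ∀ i j, ψ i j = a i + b j := by
  classical
  rcases isEmpty_or_nonempty ι with hι | ⟨⟨i₀⟩⟩
  · exact ⟨0, 0, fun i => isEmptyElim i⟩
  rcases isEmpty_or_nonempty κ with hκ | ⟨⟨j₀⟩⟩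
  · exact ⟨0, 0, fun _ j => isEmptyElim j⟩
  refine ⟨fun i => ψ i j₀, fun j => ψ i₀ j - ψ i₀ j₀, fun i j => ?_⟩
  have h := h (Pi.single i 1 - Pi.single i₀ 1) (Pi.single j 1 - Pi.single j₀ 1) (by simp) (by simp)
  simp only [Pi.sub_apply, Pi.single_apply, mul_sub, mul_ite, mul_one, mul_zero, sub_mul, ite_mul,
    one_mul, zero_mul, sum_sub_distrib, sum_ite_eq', mem_univ, ↓reduceIte] at h
  linarith

section Sinkhorn

variable {n m : ℕ} {p : Fin n → ℝ} {pt : Fin m → ℝ} {lam : ℝ} {c π : Fin n → Fin m → ℝ}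
  {α : Fin n → ℝ} {αt : Fin m → ℝ}

lemma Fobj_eq_sum (lam : ℝ) (c π : Fin n → Fin m → ℝ) :
    Fobj lam c π = ∑ i, ∑ j, entryCost lam (c i j) (π i j) := by
  simp only [Fobj, entM, entryCost, sum_add_distrib, ← sum_div]
  ring

lemma mul_Fobj_sub_dual_eq_sum (hrow : ∀ i, ∑ j, π i j = p i) (hcol : ∀ j, ∑ i, π i j = pt j)
    (hp1 : ∑ i, p i = 1) (hlam : lam ≠ 0) (hα : ∀ i, 0 < α i) (hαt : ∀ j, 0 < αt j) :
    lam * (Fobj lam c π - dual lam c p pt α αt) =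
      ∑ i, ∑ j, (π i j * (log (π i j) - log (gibbsKernel lam c α αt i j))
        - (π i j - gibbsKernel lam c α αt i j)) := by
  have hlogK : ∀ i j, log (gibbsKernel lam c α αt i j) = log (α i) - lam * c i j + log (αt j) := by
    intro i j
    rw [gibbsKernel, Real.log_mul (mul_pos (hα i) (Real.exp_pos _)).ne' (hαt j).ne',
      Real.log_mul (hα i).ne' (Real.exp_pos _).ne', Real.log_exp]
    ring
  have hrowlog : ∑ i, ∑ j, π i j * log (α i) = ∑ i, p i * log (α i) := by
    simp_rw [← sum_mul, hrow]
  have hcollog : ∑ i, ∑ j, π i j * log (αt j) = ∑ j, pt j * log (αt j) := by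
    rw [sum_comm]
    simp_rw [← sum_mul, hcol]
  have hmass : ∑ i, ∑ j, π i j = 1 := by simp_rw [hrow]; exact hp1
  have hcost : ∑ i, ∑ j, π i j * (lam * c i j) = lam * ∑ i, ∑ j, π i j * c i j := by
    simp only [mul_sum, mul_left_comm]
  simp only [hlogK, mul_sub, mul_add, sum_sub_distrib, sum_add_distrib, hrowlog, hcollog, hmass,
    hcost]
  unfold Fobj entM dual gibbsKernel
  field_simp
  ring

theorem dual_le_Fobj (hπ : IsCoupling p pt π) (hp1 : ∑ i, p i = 1) (hlam : 0 < lam)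
    (hα : ∀ i, 0 < α i) (hαt : ∀ j, 0 < αt j) :
    dual lam c p pt α αt ≤ Fobj lam c π := by
  have hgap : 0 ≤ lam * (Fobj lam c π - dual lam c p pt α αt) := by
    rw [mul_Fobj_sub_dual_eq_sum hπ.2.1 hπ.2.2 hp1 hlam.ne' hα hαt]
    exact sum_nonneg fun i _ => sum_nonneg fun j _ =>
      sub_nonneg.2 (sub_le_mul_log_sub_log (hπ.1 i j) (gibbsKernel_pos lam c hα hαt i j))
  exact sub_nonneg.1 ((mul_nonneg_iff_of_pos_left hlam).1 hgap)

theorem dual_eq_Fobj_gibbsKernel (hrow : ∀ i, ∑ j, gibbsKernel lam c α αt i j = p i)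
    (hcol : ∀ j, ∑ i, gibbsKernel lam c α αt i j = pt j) (hp1 : ∑ i, p i = 1) (hlam : lam ≠ 0)
    (hα : ∀ i, 0 < α i) (hαt : ∀ j, 0 < αt j) :
    dual lam c p pt α αt = Fobj lam c (gibbsKernel lam c α αt) := by
  have hgap := mul_Fobj_sub_dual_eq_sum (c := c) hrow hcol hp1 hlam hα hαt
  simp only [sub_self, mul_zero, sum_const_zero, mul_eq_zero, hlam, false_or] at hgap
  linarith

lemma continuous_Fobj (lam : ℝ) (c : Fin n → Fin m → ℝ) :
    Continuous (Fobj lam c) := by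
  simp only [funext (Fobj_eq_sum lam c), entryCost]
  fun_prop

lemma isCompact_setOf_isCoupling (p : Fin n → ℝ) (pt : Fin m → ℝ) :
    IsCompact {π | IsCoupling p pt π} := by
  refine (isCompact_univ_pi fun i => isCompact_univ_pi fun _ => isCompact_Icc (a := 0) (b := p i))
    |>.of_isClosed_subset ?_ ?_
  · simp only [IsCoupling, Set.ofPred_and, Set.ofPred_forall]
    exact (isClosed_iInter fun i => isClosed_iInter fun j =>
        isClosed_le (by fun_prop) (by fun_prop)).inter
      ((isClosed_iInter fun i => isClosed_eq (by fun_prop) (by fun_prop)).inter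
        (isClosed_iInter fun j => isClosed_eq (by fun_prop) (by fun_prop)))
  · rintro π ⟨hnn, hrow, -⟩
    simp only [Set.mem_univ_pi, Set.mem_Icc]
    exact fun i j => ⟨hnn i j, hrow i ▸ single_le_sum (fun j _ => hnn i j) (mem_univ j)⟩

lemma isCoupling_mul (hp : ∀ i, 0 ≤ p i) (hpt : ∀ j, 0 ≤ pt j) (hp1 : ∑ i, p i = 1)
    (hpt1 : ∑ j, pt j = 1) : IsCoupling p pt fun i j => p i * pt j :=
  ⟨fun i j => mul_nonneg (hp i) (hpt j), fun i => by rw [← mul_sum, hpt1, mul_one],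
    fun j => by rw [← sum_mul, hp1, one_mul]⟩

lemma exists_isMinOn_Fobj (hp : ∀ i, 0 ≤ p i) (hpt : ∀ j, 0 ≤ pt j) (hp1 : ∑ i, p i = 1)
    (hpt1 : ∑ j, pt j = 1) (lam : ℝ) (c : Fin n → Fin m → ℝ) :
    ∃ π₀ ∈ {π | IsCoupling p pt π}, IsMinOn (Fobj lam c) {π | IsCoupling p pt π} π₀ :=
  (isCompact_setOf_isCoupling p pt).exists_isMinOn ⟨_, isCoupling_mul hp hpt hp1 hpt1⟩
    (continuous_Fobj lam c).continuousOn

lemma IsCoupling.segment {μ : Fin n → Fin m → ℝ} (hπ : IsCoupling p pt π)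
    (hμ : IsCoupling p pt μ) {t : ℝ} (ht0 : 0 ≤ t) (ht1 : t ≤ 1) :
    IsCoupling p pt fun i j => (1 - t) * π i j + t * μ i j := by
  refine ⟨fun i j => add_nonneg (mul_nonneg (sub_nonneg.2 ht1) (hπ.1 i j))
    (mul_nonneg ht0 (hμ.1 i j)), fun i => ?_, fun j => ?_⟩
  · simp only [sum_add_distrib, ← mul_sum, hπ.2.1, hμ.2.1]
    ring
  · simp only [sum_add_distrib, ← mul_sum, hπ.2.2, hμ.2.2]
    ring

lemma Fobj_segment_le {μ : Fin n → Fin m → ℝ} (hlam : 0 < lam) (hπ : ∀ i j, 0 ≤ π i j)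
    (hμ : ∀ i j, 0 ≤ μ i j) {i₀ : Fin n} {j₀ : Fin m} (hzero : π i₀ j₀ = 0) {t : ℝ}
    (ht0 : 0 < t) (ht1 : t ≤ 1) :
    Fobj lam c (fun i j => (1 - t) * π i j + t * μ i j) ≤
      (1 - t) * Fobj lam c π + t * Fobj lam c μ + t * μ i₀ j₀ * log t / lam := by
  set gap : Fin n → Fin m → ℝ := fun i j => (1 - t) * entryCost lam (c i j) (π i j)
    + t * entryCost lam (c i j) (μ i j) - entryCost lam (c i j) ((1 - t) * π i j + t * μ i j)
  have hgap : ∀ i j, 0 ≤ gap i j := fun i j => sub_nonneg.2 <|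
    (convexOn_entryCost hlam.le (c i j)).2 (hπ i j) (hμ i j) (sub_nonneg.2 ht1) ht0.le (by ring)
  have hgap₀ : gap i₀ j₀ = -(t * μ i₀ j₀ * log t / lam) := by
    simp only [gap, hzero, mul_zero, zero_add, entryCost_mul _ _ _ ht0]
    simp [entryCost]
  have hsum : ∑ i, ∑ j, gap i j = (1 - t) * Fobj lam c π + t * Fobj lam c μ
      - Fobj lam c (fun i j => (1 - t) * π i j + t * μ i j) := by
    simp only [gap, Fobj_eq_sum, sum_sub_distrib, sum_add_distrib, mul_sum]
  have hle : gap i₀ j₀ ≤ ∑ i, ∑ j, gap i j :=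
    (single_le_sum (fun j _ => hgap i₀ j) (mem_univ j₀)).trans
      (single_le_sum (fun i _ => sum_nonneg fun j _ => hgap i j) (mem_univ i₀))
  linarith

theorem pos_of_isMinOn_Fobj {π₀ : Fin n → Fin m → ℝ} (hp0 : ∀ i, 0 < p i) (hpt0 : ∀ j, 0 < pt j)
    (hp1 : ∑ i, p i = 1) (hpt1 : ∑ j, pt j = 1) (hlam : 0 < lam) (hπ₀ : IsCoupling p pt π₀)
    (hmin : IsMinOn (Fobj lam c) {π | IsCoupling p pt π} π₀) (i : Fin n) (j : Fin m) :
    0 < π₀ i j := by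
  refine (hπ₀.1 i j).lt_of_ne' fun hzero => ?_
  have hμ := isCoupling_mul (fun i => (hp0 i).le) (fun j => (hpt0 j).le) hp1 hpt1
  set μ : Fin n → Fin m → ℝ := fun i j => p i * pt j
  have hμ₀ : 0 < μ i j := mul_pos (hp0 i) (hpt0 j)
  set D := Fobj lam c μ - Fobj lam c π₀
  have hD : 0 ≤ D := sub_nonneg.2 (hmin hμ)
  -- with `log t = -(λ D / μᵢⱼ + 1)`, the entropy gained at the empty entry, `-t μᵢⱼ log t / λ`,
  -- exceeds the cost `t D` of moving towards `μ`
  set t := Real.exp (-(lam * D / μ i j + 1))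
  have ht0 : 0 < t := Real.exp_pos _
  have ht1 : t ≤ 1 := by
    have := div_nonneg (mul_nonneg hlam.le hD) hμ₀.le
    exact Real.exp_le_one_iff.2 (by linarith)
  have hlogt : t * μ i j * log t / lam = -(t * D) - t * μ i j / lam := by
    rw [Real.log_exp]
    field_simp
    ring
  have hle := hmin (hπ₀.segment hμ ht0.le ht1)
  have hup := Fobj_segment_le (c := c) hlam hπ₀.1 hμ.1 hzero ht0 ht1
  have hpos : 0 < t * μ i j / lam := by positivity
  simp only [Set.mem_ofPred_eq] at hle
  linarith

lemma hasDerivAt_Fobj_add_mul (hπ : ∀ i j, π i j ≠ 0) (D : Fin n → Fin m → ℝ) :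
    HasDerivAt (fun t => Fobj lam c fun i j => π i j + t * D i j)
      (∑ i, ∑ j, D i j * (c i j + (log (π i j) + 1) / lam)) 0 := by
  simp only [Fobj_eq_sum]
  refine HasDerivAt.fun_sum fun i _ => HasDerivAt.fun_sum fun j _ => ?_
  have hline : HasDerivAt (fun t => π i j + t * D i j) (D i j) 0 := by
    simpa using ((hasDerivAt_id (0 : ℝ)).mul_const (D i j)).const_add (π i j)
  exact ((hasDerivAt_entryCost lam (c i j) (hπ i j)).comp_of_eq 0 hline (by simp)).congr_deriv
    (mul_comm _ _)

theorem sum_mul_gradient_eq_zero_of_isMinOn {π₀ D : Fin n → Fin m → ℝ} (hπ₀ : IsCoupling p pt π₀)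
    (hpos : ∀ i j, 0 < π₀ i j) (hmin : IsMinOn (Fobj lam c) {π | IsCoupling p pt π} π₀)
    (hDrow : ∀ i, ∑ j, D i j = 0) (hDcol : ∀ j, ∑ i, D i j = 0) :
    ∑ i, ∑ j, D i j * (c i j + (log (π₀ i j) + 1) / lam) = 0 := by
  refine IsLocalMin.hasDerivAt_eq_zero ?_ (hasDerivAt_Fobj_add_mul (fun i j => (hpos i j).ne') D)
  have hnear : ∀ᶠ t in 𝓝 (0 : ℝ), ∀ i j, 0 ≤ π₀ i j + t * D i j := by
    simp only [eventually_all]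
    intro i j
    have hcont : Tendsto (fun t => π₀ i j + t * D i j) (𝓝 0) (𝓝 (π₀ i j)) :=
      (by fun_prop : Continuous fun t => π₀ i j + t * D i j).tendsto' 0 _ (by simp)
    exact (hcont.eventually (lt_mem_nhds (hpos i j))).mono fun _ h => h.le
  filter_upwards [hnear] with t ht
  have hcoup : IsCoupling p pt fun i j => π₀ i j + t * D i j :=
    ⟨ht, fun i => by simp [sum_add_distrib, ← mul_sum, hDrow, hπ₀.2.1],
      fun j => by simp [sum_add_distrib, ← mul_sum, hDcol, hπ₀.2.2]⟩
  simpa using hmin hcoup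

theorem exists_eq_gibbsKernel_of_isMinOn {π₀ : Fin n → Fin m → ℝ} (hlam : lam ≠ 0)
    (hπ₀ : IsCoupling p pt π₀) (hpos : ∀ i j, 0 < π₀ i j)
    (hmin : IsMinOn (Fobj lam c) {π | IsCoupling p pt π} π₀) :
    ∃ α αt, (∀ i, 0 < α i) ∧ (∀ j, 0 < αt j) ∧ π₀ = gibbsKernel lam c α αt := by
  obtain ⟨a, b, hab⟩ := exists_add_of_forall_sum_mul_mul_eq_zero fun u v hu hv =>
    sum_mul_gradient_eq_zero_of_isMinOn (D := fun i j => u i * v j) hπ₀ hpos hmin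
      (fun i => by rw [← mul_sum, hv, mul_zero]) (fun j => by rw [← sum_mul, hu, zero_mul])
  refine ⟨fun i => Real.exp (lam * a i), fun j => Real.exp (lam * b j - 1),
    fun i => Real.exp_pos _, fun j => Real.exp_pos _, funext fun i => funext fun j => ?_⟩
  have h := hab i j
  field_simp at h
  rw [gibbsKernel, ← Real.exp_add, ← Real.exp_add, ← Real.exp_log (hpos i j)]
  congr 1
  linarith

end Sinkhorn

theorem sinkhorn_strong_duality_general {n m : ℕ}
    (p : Fin n → ℝ) (pt : Fin m → ℝ)
    (hp0 : ∀ i, 0 < p i) (hpt0 : ∀ j, 0 < pt j)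
    (hp1 : ∑ i, p i = 1) (hpt1 : ∑ j, pt j = 1)
    (c : Fin n → Fin m → ℝ)
    (lam : ℝ) (hlam : 0 < lam) :
    ∃ v : ℝ,
      IsGreatest {x : ℝ | ∃ (α : Fin n → ℝ) (αt : Fin m → ℝ),
        (∀ i, 0 < α i) ∧ (∀ j, 0 < αt j) ∧ x = dual lam c p pt α αt} v ∧
      IsLeast {x : ℝ | ∃ π : Fin n → Fin m → ℝ,
        IsCoupling p pt π ∧ (∀ i j, 0 < π i j) ∧ x = Fobj lam c π} v := by
  obtain ⟨π₀, hπ₀, hmin⟩ :=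
    exists_isMinOn_Fobj (fun i => (hp0 i).le) (fun j => (hpt0 j).le) hp1 hpt1 lam c
  have hpos := pos_of_isMinOn_Fobj hp0 hpt0 hp1 hpt1 hlam hπ₀ hmin
  obtain ⟨α, αt, hα, hαt, rfl⟩ := exists_eq_gibbsKernel_of_isMinOn hlam.ne' hπ₀ hpos hmin
  have hdual := dual_eq_Fobj_gibbsKernel hπ₀.2.1 hπ₀.2.2 hp1 hlam.ne' hα hαt
  refine ⟨_, ⟨⟨α, αt, hα, hαt, hdual.symm⟩, ?_⟩, ⟨_, hπ₀, hpos, rfl⟩, ?_⟩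
  · rintro _ ⟨α', αt', hα', hαt', rfl⟩
    exact dual_le_Fobj hπ₀ hp1 hlam hα' hαt'
  · rintro _ ⟨π, hπ, -, rfl⟩
    exact hmin hπ

/-- Strong duality for the Sinkhorn problem (Proposition 3.5): the supremum of the dual
over strictly positive vectors equals the minimum of the primal over strictly positive
couplings, and both are attained. -/
theorem sinkhorn_strong_duality {n m : ℕ} (hn : 1 ≤ n) (hm : 1 ≤ m)
    (p : Fin n → ℝ) (pt : Fin m → ℝ)
    (hp0 : ∀ i, 0 < p i) (hpt0 : ∀ j, 0 < pt j)
    (hp1 : ∑ i, p i = 1) (hpt1 : ∑ j, pt j = 1)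
    (c : Fin n → Fin m → ℝ) (hc : ∀ i j, 0 ≤ c i j)
    (lam : ℝ) (hlam : 0 < lam) :
    ∃ v : ℝ,
      IsGreatest {x : ℝ | ∃ (α : Fin n → ℝ) (αt : Fin m → ℝ),
        (∀ i, 0 < α i) ∧ (∀ j, 0 < αt j) ∧ x = dual lam c p pt α αt} v ∧
      IsLeast {x : ℝ | ∃ π : Fin n → Fin m → ℝ,
        IsCoupling p pt π ∧ (∀ i j, 0 < π i j) ∧ x = Fobj lam c π} v :=
  sinkhorn_strong_duality_general p pt hp0 hpt0 hp1 hpt1 c lam hlam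
end

section
/- If strictly positive vectors α ∈ ℝ^n and α̃ ∈ ℝ^ñ satisfy the Sinkhorn fixed-point equations α_i ∑_j k_ij α̃_j = p_i for all i and α̃_j ∑_i k_ij α_i = p̃_j for all j, where k_ij = e^{-λ c_ij}, then the matrix π_ij = α_i k_ij α̃_j is a coupling of (p, p̃) with strictly positive entries, and π minimizes F_λ over all such couplings. -/
open Finset

lemma klterm {a b : ℝ} (ha : 0 < a) (hb : 0 < b) :
    a - b ≤ a * (Real.log a - Real.log b) := by
  have h := Real.log_le_sub_one_of_pos (div_pos hb ha)
  rw [Real.log_div hb.ne' ha.ne'] at h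
  have h2 := mul_le_mul_of_nonneg_left h ha.le
  have h3 : a * (b / a - 1) = b - a := by field_simp
  nlinarith

/-- If strictly positive vectors `α, α̃` satisfy the Sinkhorn fixed-point equations for
`kᵢⱼ = exp(-λ cᵢⱼ)`, then `πᵢⱼ = αᵢ kᵢⱼ α̃ⱼ` is a strictly positive coupling of `(p, p̃)`
minimizing the Sinkhorn objective over all such couplings. -/
theorem sinkhorn_fixed_point_optimal {n m : ℕ} (hn : 1 ≤ n) (hm : 1 ≤ m)
    (p : Fin n → ℝ) (pt : Fin m → ℝ)
    (hp0 : ∀ i, 0 ≤ p i) (hpt0 : ∀ j, 0 ≤ pt j)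
    (hp1 : ∑ i, p i = 1) (hpt1 : ∑ j, pt j = 1)
    (c : Fin n → Fin m → ℝ) (hc : ∀ i j, 0 ≤ c i j)
    (lam : ℝ) (hlam : 0 < lam)
    (α : Fin n → ℝ) (αt : Fin m → ℝ)
    (hα : ∀ i, 0 < α i) (hαt : ∀ j, 0 < αt j)
    (hfp1 : ∀ i, α i * ∑ j, Real.exp (-lam * c i j) * αt j = p i)
    (hfp2 : ∀ j, αt j * ∑ i, Real.exp (-lam * c i j) * α i = pt j) :
    IsCoupling p pt (fun i j => α i * Real.exp (-lam * c i j) * αt j) ∧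
      (∀ i j, 0 < α i * Real.exp (-lam * c i j) * αt j) ∧
      ∀ π : Fin n → Fin m → ℝ, IsCoupling p pt π → (∀ i j, 0 < π i j) →
        Fobj lam c (fun i j => α i * Real.exp (-lam * c i j) * αt j) ≤ Fobj lam c π := by
  set q : Fin n → Fin m → ℝ := fun i j => α i * Real.exp (-lam * c i j) * αt j with hqdef
  have hqpos : ∀ i j, 0 < q i j := fun i j =>
    mul_pos (mul_pos (hα i) (Real.exp_pos _)) (hαt j)
  have hqrow : ∀ i, ∑ j, q i j = p i := by
    intro i
    calc ∑ j, q i j = α i * ∑ j, Real.exp (-lam * c i j) * αt j := by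
          rw [Finset.mul_sum]
          exact Finset.sum_congr rfl fun j _ => by simp [q, mul_assoc]
      _ = p i := hfp1 i
  have hqcol : ∀ j, ∑ i, q i j = pt j := by
    intro j
    calc ∑ i, q i j = αt j * ∑ i, Real.exp (-lam * c i j) * α i := by
          rw [Finset.mul_sum]
          exact Finset.sum_congr rfl fun i _ => by simp [q]; ring
      _ = pt j := hfp2 j
  have hqcoup : IsCoupling p pt q := ⟨fun i j => (hqpos i j).le, hqrow, hqcol⟩
  have hlog : ∀ i j, Real.log (q i j)
      = Real.log (α i) + (-lam * c i j) + Real.log (αt j) := by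
    intro i j
    rw [show q i j = α i * Real.exp (-lam * c i j) * αt j from rfl,
      Real.log_mul (mul_pos (hα i) (Real.exp_pos _)).ne' (hαt j).ne',
      Real.log_mul (hα i).ne' (Real.exp_pos _).ne', Real.log_exp]
  have key : ∀ ρ : Fin n → Fin m → ℝ, IsCoupling p pt ρ →
      lam * Fobj lam c ρ =
        (∑ i, p i * Real.log (α i)) + (∑ j, pt j * Real.log (αt j))
          + ∑ i, ∑ j, ρ i j * (Real.log (ρ i j) - Real.log (q i j)) := by
    intro ρ ⟨h0, hrow, hcol⟩
    have expand : lam * Fobj lam c ρ =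
        ∑ i, ∑ j, ρ i j * (lam * c i j + Real.log (ρ i j)) := by
      have hs : ∑ i, ∑ j, ρ i j * (lam * c i j + Real.log (ρ i j))
          = lam * (∑ i, ∑ j, ρ i j * c i j)
            + ∑ i, ∑ j, ρ i j * Real.log (ρ i j) := by
        rw [Finset.mul_sum, ← Finset.sum_add_distrib]
        refine Finset.sum_congr rfl fun i _ => ?_
        rw [Finset.mul_sum, ← Finset.sum_add_distrib]
        exact Finset.sum_congr rfl fun j _ => by ring
      rw [hs]
      simp only [Fobj, entM]
      field_simp
      ring
    rw [expand]
    have split : ∑ i, ∑ j, ρ i j * (lam * c i j + Real.log (ρ i j))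
        = (∑ i, ∑ j, ρ i j * Real.log (α i)) + (∑ i, ∑ j, ρ i j * Real.log (αt j))
          + ∑ i, ∑ j, ρ i j * (Real.log (ρ i j) - Real.log (q i j)) := by
      rw [← Finset.sum_add_distrib, ← Finset.sum_add_distrib]
      refine Finset.sum_congr rfl fun i _ => ?_
      rw [← Finset.sum_add_distrib, ← Finset.sum_add_distrib]
      refine Finset.sum_congr rfl fun j _ => ?_
      rw [hlog i j]; ring
    rw [split]
    congr 1
    congr 1
    · refine Finset.sum_congr rfl fun i _ => ?_
      rw [← Finset.sum_mul, hrow]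
    · rw [Finset.sum_comm]
      refine Finset.sum_congr rfl fun j _ => ?_
      rw [← Finset.sum_mul, hcol]
  refine ⟨hqcoup, hqpos, fun π hπcoup hπpos => ?_⟩
  have h1 := key q hqcoup
  have h2 := key π hπcoup
  have hzero : ∑ i, ∑ j, q i j * (Real.log (q i j) - Real.log (q i j)) = 0 := by
    simp
  have hsumπ : ∑ i, ∑ j, π i j = 1 := by
    rw [Finset.sum_congr rfl fun i _ => hπcoup.2.1 i, hp1]
  have hsumq : ∑ i, ∑ j, q i j = 1 := by
    rw [Finset.sum_congr rfl fun i _ => hqrow i, hp1]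
  have hK : 0 ≤ ∑ i, ∑ j, π i j * (Real.log (π i j) - Real.log (q i j)) := by
    have hle : ∑ i, ∑ j, (π i j - q i j)
        ≤ ∑ i, ∑ j, π i j * (Real.log (π i j) - Real.log (q i j)) :=
      Finset.sum_le_sum fun i _ => Finset.sum_le_sum fun j _ =>
        klterm (hπpos i j) (hqpos i j)
    have heq : ∑ i, ∑ j, (π i j - q i j) = 0 := by
      simp only [Finset.sum_sub_distrib]
      rw [hsumπ, hsumq]; ring
    linarith
  have : lam * Fobj lam c q ≤ lam * Fobj lam c π := by
    rw [h1, h2, hzero]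
    linarith
  exact le_of_mul_le_mul_left this hlam
end

section
/- Strict positivity of the entropy-regularized optimizer (Remark 3.2): if all p_i > 0 and all p̃_j > 0, then every minimizer π of F_λ(π) = ∑_{ij} π_ij c_ij - (1/λ) H(π) over the set of all couplings of (p, p̃) (with merely nonnegative entries) satisfies π_ij > 0 for all i, j. -/
open Finset

lemma phi_convex_aux {a b t : ℝ} (ha : 0 ≤ a) (hb : 0 ≤ b) (ht0 : 0 ≤ t) (ht1 : t ≤ 1) :
    ((1-t)*a + t*b) * Real.log ((1-t)*a + t*b)
      ≤ (1-t)*(a*Real.log a) + t*(b*Real.log b) := by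
  have := Real.convexOn_mul_log.2 (Set.mem_Ici.2 ha) (Set.mem_Ici.2 hb)
    (by linarith : (0:ℝ) ≤ 1 - t) ht0 (by ring)
  simpa [smul_eq_mul] using this

/-- Strict positivity of the entropy-regularized optimizer (Remark 3.2): if all marginal
weights are positive, every minimizer of `F_λ` over (merely nonnegative) couplings has
strictly positive entries. -/
theorem minimizer_strictly_positive {n m : ℕ} (hn : 1 ≤ n) (hm : 1 ≤ m)
    (p : Fin n → ℝ) (pt : Fin m → ℝ)
    (hp0 : ∀ i, 0 < p i) (hpt0 : ∀ j, 0 < pt j)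
    (hp1 : ∑ i, p i = 1) (hpt1 : ∑ j, pt j = 1)
    (c : Fin n → Fin m → ℝ) (hc : ∀ i j, 0 ≤ c i j)
    (lam : ℝ) (hlam : 0 < lam)
    (π : Fin n → Fin m → ℝ) (hπ : IsCoupling p pt π)
    (hmin : ∀ ρ : Fin n → Fin m → ℝ, IsCoupling p pt ρ →
      Fobj lam c π ≤ Fobj lam c ρ) :
    ∀ i j, 0 < π i j := by
  by_contra hcon
  push_neg at hcon
  obtain ⟨i0, j0, h0⟩ := hcon
  have hzero : π i0 j0 = 0 := le_antisymm h0 (hπ.1 i0 j0)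
  -- independent coupling
  set ρ : Fin n → Fin m → ℝ := fun i j => p i * pt j with hρdef
  have hρpos : ∀ i j, 0 < ρ i j := fun i j => mul_pos (hp0 i) (hpt0 j)
  have hρc : IsCoupling p pt ρ := by
    refine ⟨fun i j => (hρpos i j).le, fun i => ?_, fun j => ?_⟩
    · simp only [hρdef]; rw [← Finset.mul_sum, hpt1, mul_one]
    · simp only [hρdef]; rw [← Finset.sum_mul, hp1, one_mul]
  set ρ0 : ℝ := p i0 * pt j0 with hρ0def
  have hρ0pos : 0 < ρ0 := mul_pos (hp0 i0) (hpt0 j0)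
  set D : ℝ := Fobj lam c ρ - Fobj lam c π with hDdef
  have hD : 0 ≤ D := by have := hmin ρ hρc; simp only [hDdef]; linarith
  set t : ℝ := Real.exp (-(lam * D / ρ0) - 1) with htdef
  have ht0 : 0 < t := Real.exp_pos _
  have ht1 : t < 1 := by
    rw [htdef, Real.exp_lt_one_iff]
    have : 0 ≤ lam * D / ρ0 := div_nonneg (mul_nonneg hlam.le hD) hρ0pos.le
    linarith
  have hlogt : Real.log t = -(lam * D / ρ0) - 1 := Real.log_exp _
  have hlogt_neg : Real.log t < 0 := by
    have : 0 ≤ lam * D / ρ0 := div_nonneg (mul_nonneg hlam.le hD) hρ0pos.le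
    rw [hlogt]; linarith
  -- perturbed coupling
  set σ : Fin n → Fin m → ℝ := fun i j => (1 - t) * π i j + t * ρ i j with hσdef
  have hσc : IsCoupling p pt σ := by
    refine ⟨fun i j => ?_, fun i => ?_, fun j => ?_⟩
    · exact add_nonneg (mul_nonneg (by linarith) (hπ.1 i j)) (mul_nonneg ht0.le (hρc.1 i j))
    · simp only [hσdef]
      rw [Finset.sum_add_distrib, ← Finset.mul_sum, ← Finset.mul_sum, hπ.2.1 i, hρc.2.1 i]
      ring
    · simp only [hσdef]
      rw [Finset.sum_add_distrib, ← Finset.mul_sum, ← Finset.mul_sum, hπ.2.2 j, hρc.2.2 j]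
      ring
  -- linear part
  have hlin : ∑ i, ∑ j, σ i j * c i j
      = (1 - t) * (∑ i, ∑ j, π i j * c i j) + t * (∑ i, ∑ j, ρ i j * c i j) := by
    simp only [hσdef, Finset.mul_sum]
    rw [← Finset.sum_add_distrib]
    refine Finset.sum_congr rfl fun i _ => ?_
    rw [← Finset.sum_add_distrib]
    exact Finset.sum_congr rfl fun j _ => by ring
  -- entropy part
  have hent : ∑ i, ∑ j, σ i j * Real.log (σ i j)
      ≤ (1 - t) * (∑ i, ∑ j, π i j * Real.log (π i j))
        + t * (∑ i, ∑ j, ρ i j * Real.log (ρ i j)) + t * Real.log t * ρ0 := by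
    have key : ∀ i j, σ i j * Real.log (σ i j)
        ≤ (1 - t) * (π i j * Real.log (π i j)) + t * (ρ i j * Real.log (ρ i j))
          + (if (i, j) = (i0, j0) then t * Real.log t * ρ0 else 0) := by
      intro i j
      by_cases hij : (i, j) = (i0, j0)
      · obtain ⟨hi, hj⟩ := Prod.mk.injEq .. ▸ hij
        subst hi; subst hj
        rw [if_pos rfl]
        have h1 : σ i j = t * ρ0 := by
          show (1 - t) * π i j + t * (p i * pt j) = t * ρ0
          rw [hzero, hρ0def]; ring
        have h2 : ρ i j = ρ0 := rfl
        rw [h1, h2, hzero, Real.log_mul (ne_of_gt ht0) (ne_of_gt hρ0pos)]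
        have : t * ρ0 * (Real.log t + Real.log ρ0)
            = (1 - t) * (0 * Real.log 0) + t * (ρ0 * Real.log ρ0) + t * Real.log t * ρ0 := by
          rw [Real.log_zero]; ring
        linarith
      · rw [if_neg hij, add_zero]
        exact phi_convex_aux (hπ.1 i j) (hρc.1 i j) ht0.le ht1.le
    calc ∑ i, ∑ j, σ i j * Real.log (σ i j)
        ≤ ∑ i, ∑ j, ((1 - t) * (π i j * Real.log (π i j)) + t * (ρ i j * Real.log (ρ i j))
            + (if (i, j) = (i0, j0) then t * Real.log t * ρ0 else 0)) := by
          refine Finset.sum_le_sum fun i _ => Finset.sum_le_sum fun j _ => key i j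
      _ = (1 - t) * (∑ i, ∑ j, π i j * Real.log (π i j))
            + t * (∑ i, ∑ j, ρ i j * Real.log (ρ i j)) + t * Real.log t * ρ0 := by
          have hif : ∑ i, ∑ j, (if (i, j) = (i0, j0) then t * Real.log t * ρ0 else 0)
              = t * Real.log t * ρ0 := by
            rw [Finset.sum_eq_single i0]
            · rw [Finset.sum_eq_single j0]
              · simp
              · intro j _ hj; rw [if_neg (by simp [hj])]
              · simp
            · intro i _ hi
              refine Finset.sum_eq_zero fun j _ => ?_
              rw [if_neg (by simp [hi])]
            · simp
          simp only [Finset.sum_add_distrib, ← Finset.mul_sum, hif]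
    -- done
  -- combine
  have hFσ : Fobj lam c σ ≤ (1 - t) * Fobj lam c π + t * Fobj lam c ρ
      + (1 / lam) * (t * Real.log t * ρ0) := by
    simp only [Fobj, entM]
    have hinv : 0 ≤ 1 / lam := by positivity
    nlinarith [mul_le_mul_of_nonneg_left hent hinv]
  have hmin' := hmin σ hσc
  have hstep : 0 ≤ t * D + (1 / lam) * (t * Real.log t * ρ0) := by
    have : Fobj lam c π ≤ (1 - t) * Fobj lam c π + t * Fobj lam c ρ
        + (1 / lam) * (t * Real.log t * ρ0) := le_trans hmin' hFσ
    simp only [hDdef]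
    nlinarith
  have hfinal : t * D + (1 / lam) * (t * Real.log t * ρ0) < 0 := by
    rw [hlogt]
    have hlamne : lam ≠ 0 := ne_of_gt hlam
    have hρ0ne : ρ0 ≠ 0 := ne_of_gt hρ0pos
    have : t * D + 1 / lam * (t * (-(lam * D / ρ0) - 1) * ρ0)
        = -(t * ρ0 / lam) := by field_simp; ring
    rw [this]
    have : 0 < t * ρ0 / lam := by positivity
    linarith
  linarith
end
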